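/- arXiv:1902.00734 — 3 statements merged into one kernel-verified Lean document; each statement's English description precedes it below -/
import Mathlib

section
/- For n i.i.d. real random variables X_1,...,X_n with common bounded density f, and bandwidths h_1,...,h_n > 0, the variance of the Wolverton-Wagner estimator f̂_n(x) = (1/n) Σ_{k=1}^n (1/h_k) K((X_k - x)/h_k) satisfies Var(f̂_n(x)) ≤ (‖f‖_∞ ‖K‖₂² / n²) Σ_{k=1}^n 1/h_k for every x ∈ ℝ. -/
/-!
Write the estimator as `(1/n) ∑ₖ Kₖ(Xₖ)` with `Kₖ(y) = h_k⁻¹ K((y - x)/h_k)`. The summands are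
independent, so the variance of the sum is the sum of the variances. Each variance is at most the
second moment `∫ Kₖ² f ≤ ‖f‖_∞ ∫ Kₖ²`, and the change of variables `z = (y - x)/h_k` gives
`∫ Kₖ² = ‖K‖₂² / h_k`.
-/

open MeasureTheory ProbabilityTheory

namespace MeasureTheory

variable {α Ω : Type*} [MeasurableSpace α] [MeasurableSpace Ω] {μ : Measure Ω} {ν : Measure α}
  {X : Ω → α} {c : ENNReal}

lemma map_le_smul_of_density_le {f : α → ℝ} {M : ℝ}
    (hX : μ.map X = ν.withDensity (fun y => ENNReal.ofReal (f y))) (hfM : ∀ y, f y ≤ M) :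
    μ.map X ≤ ENNReal.ofReal M • ν := by
  rw [hX, ← withDensity_const]
  exact withDensity_mono (Filter.Eventually.of_forall fun y => ENNReal.ofReal_le_ofReal (hfM y))

lemma MemLp.comp_of_map_le_smul {p : ENNReal} {g : α → ℝ} (hg : MemLp g p ν)
    (hX : AEMeasurable X μ) (hc : c ≠ ⊤) (hle : μ.map X ≤ c • ν) : MemLp (g ∘ X) p μ :=
  (hg.of_measure_le_smul hc hle).comp_of_map hX

lemma integral_comp_le_of_map_le_smul {g : α → ℝ} (hg0 : 0 ≤ g) (hg : Integrable g ν)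
    (hX : AEMeasurable X μ) (hc : c ≠ ⊤) (hle : μ.map X ≤ c • ν) :
    ∫ ω, g (X ω) ∂μ ≤ c.toReal * ∫ y, g y ∂ν := by
  rw [← integral_map hX (hg.1.mono_ac (Measure.absolutelyContinuous_of_le_smul hle)),
    ← smul_eq_mul, ← integral_smul_measure]
  exact integral_mono_measure hle (Filter.Eventually.of_forall hg0) (hg.smul_measure hc)

lemma variance_comp_le_of_map_le_smul [IsProbabilityMeasure μ] {g : α → ℝ} (hg : MemLp g 2 ν)
    (hX : AEMeasurable X μ) (hc : c ≠ ⊤) (hle : μ.map X ≤ c • ν) :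
    Var[g ∘ X; μ] ≤ c.toReal * ∫ y, g y ^ 2 ∂ν :=
  (variance_le_expectation_sq (hg.comp_of_map_le_smul hX hc hle).1).trans
    (integral_comp_le_of_map_le_smul (fun y => sq_nonneg (g y)) hg.integrable_sq hX hc hle)

end MeasureTheory

lemma ProbabilityTheory.iIndepFun.variance_fun_sum {Ω ι : Type*} [MeasurableSpace Ω] {μ : Measure Ω} [Fintype ι]
    {Y : ι → Ω → ℝ} (hY : ∀ i, MemLp (Y i) 2 μ) (hind : iIndepFun Y μ) :
    Var[fun ω => ∑ i, Y i ω; μ] = ∑ i, Var[Y i; μ] := by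
  rw [← IndepFun.variance_sum (fun i _ => hY i) fun i _ j _ hij => hind.indepFun hij]
  congr 1
  ext ω
  simp only [Finset.sum_apply]

section ScaledKernel

lemma Real.map_volume_sub_div {h : ℝ} (hh : h ≠ 0) (x : ℝ) :
    volume.map (fun y => (y - x) / h) = ENNReal.ofReal |h| • volume := by
  have hcomp : (fun y => (y - x) / h) = (fun y => y * h⁻¹) ∘ (fun y => y - x) := by
    funext y
    simp [div_eq_mul_inv]
  rw [hcomp, ← Measure.map_map (by fun_prop) (by fun_prop),
    (measurePreserving_sub_right volume x).map_eq, Real.map_volume_mul_right (inv_ne_zero hh),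
    inv_inv]

lemma integral_comp_sub_div {E : Type*} [NormedAddCommGroup E] [NormedSpace ℝ E] (g : ℝ → E)
    (x h : ℝ) : ∫ y, g ((y - x) / h) = |h| • ∫ z, g z :=
  (integral_sub_right_eq_self (fun t => g (t / h)) x).trans (Measure.integral_comp_div g h)

noncomputable def scaledKernel (K : ℝ → ℝ) (h x : ℝ) (y : ℝ) : ℝ := 1 / h * K ((y - x) / h)

variable {K : ℝ → ℝ} {h : ℝ}

lemma MeasureTheory.MemLp.scaledKernel {p : ENNReal} (hK : MemLp K p volume) (hh : h ≠ 0) (x : ℝ) :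
    MemLp (scaledKernel K h x) p volume := by
  have hK' : MemLp K p (volume.map fun y => (y - x) / h) := by
    rw [Real.map_volume_sub_div hh]
    exact hK.smul_measure ENNReal.ofReal_ne_top
  exact (hK'.comp_of_map (by fun_prop)).const_mul (1 / h)

lemma integral_sq_scaledKernel (hh : 0 < h) (x : ℝ) :
    ∫ y, scaledKernel K h x y ^ 2 = (∫ z, K z ^ 2) / h := by
  simp only [scaledKernel, mul_pow]
  rw [integral_const_mul, integral_comp_sub_div (fun z => K z ^ 2), abs_of_pos hh, smul_eq_mul]
  field_simp

end ScaledKernel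

theorem stmt_0_general
    {Ω : Type*} [MeasureSpace Ω] [IsProbabilityMeasure (ℙ : Measure Ω)]
    (n : ℕ)
    (X : Fin n → Ω → ℝ) (hXmeas : ∀ k, Measurable (X k))
    (hindep : iIndepFun X ℙ)
    (f : ℝ → ℝ) (M : ℝ)
    (hf0 : ∀ y, 0 ≤ f y) (hfM : ∀ y, f y ≤ M)
    (hdens : ∀ k, Measure.map (X k) ℙ
      = volume.withDensity (fun y => ENNReal.ofReal (f y)))
    (K : ℝ → ℝ) (hK : MemLp K 2 volume)
    (h : Fin n → ℝ) (hh : ∀ k, 0 < h k) (x : ℝ) :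
    variance (fun ω => (1 / (n : ℝ)) * ∑ k, (1 / h k) * K ((X k ω - x) / h k)) ℙ
      ≤ M * (∫ z, (K z) ^ 2) / (n : ℝ) ^ 2 * ∑ k, 1 / h k := by
  have hM : 0 ≤ M := (hf0 0).trans (hfM 0)
  have hle k : Measure.map (X k) ℙ ≤ ENNReal.ofReal M • volume := map_le_smul_of_density_le (hdens k) hfM
  have hKh k : MemLp (scaledKernel K (h k) x) 2 volume := hK.scaledKernel (hh k).ne' x
  have hY k : MemLp (scaledKernel K (h k) x ∘ X k) 2 ℙ :=
    (hKh k).comp_of_map_le_smul (hXmeas k).aemeasurable ENNReal.ofReal_ne_top (hle k)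
  have hind : iIndepFun (fun k => scaledKernel K (h k) x ∘ X k) ℙ :=
    hindep.comp₀ _ (fun k => (hXmeas k).aemeasurable) fun k =>
      (hKh k).aestronglyMeasurable.aemeasurable.mono_ac
        (Measure.absolutelyContinuous_of_le_smul (hle k))
  change Var[fun ω => 1 / (n : ℝ) * ∑ k, (scaledKernel K (h k) x ∘ X k) ω; ℙ] ≤ _
  rw [variance_const_mul, hind.variance_fun_sum hY]
  calc (1 / (n : ℝ)) ^ 2 * ∑ k, Var[scaledKernel K (h k) x ∘ X k; ℙ]
      ≤ (1 / (n : ℝ)) ^ 2 * ∑ k, M * ((∫ z, K z ^ 2) / h k) := by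
        gcongr with k
        refine (variance_comp_le_of_map_le_smul (hKh k) (hXmeas k).aemeasurable
          ENNReal.ofReal_ne_top (hle k)).trans_eq ?_
        rw [ENNReal.toReal_ofReal hM, integral_sq_scaledKernel (hh k)]
    _ = M * (∫ z, K z ^ 2) / (n : ℝ) ^ 2 * ∑ k, 1 / h k := by
        simp only [Finset.mul_sum]
        exact Finset.sum_congr rfl fun k _ => by ring

/-- Variance bound for the Wolverton-Wagner estimator:
`Var(f̂_n(x)) ≤ ‖f‖_∞ ‖K‖₂² / n² * ∑ 1/h_k`. -/
theorem stmt_0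
    {Ω : Type*} [MeasureSpace Ω] [IsProbabilityMeasure (ℙ : Measure Ω)]
    (n : ℕ) (hn : 0 < n)
    (X : Fin n → Ω → ℝ) (hXmeas : ∀ k, Measurable (X k))
    (hindep : iIndepFun X ℙ)
    (f : ℝ → ℝ) (M : ℝ)
    (hf0 : ∀ y, 0 ≤ f y) (hfM : ∀ y, f y ≤ M)
    (hdens : ∀ k, Measure.map (X k) ℙ
      = volume.withDensity (fun y => ENNReal.ofReal (f y)))
    (K : ℝ → ℝ) (hK : MemLp K 2 volume)
    (h : Fin n → ℝ) (hh : ∀ k, 0 < h k) (x : ℝ) :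
    variance (fun ω => (1 / (n : ℝ)) * ∑ k, (1 / h k) * K ((X k ω - x) / h k)) ℙ
      ≤ M * (∫ z, (K z) ^ 2) / (n : ℝ) ^ 2 * ∑ k, 1 / h k :=
  stmt_0_general n X hXmeas hindep f M hf0 hfM hdens K hK h hh x
end

section
/- Let f be a density whose ℓ-th derivative exists (ℓ = ⌊β⌋) and is (β−ℓ)-Hölder with constant L, and let K be a kernel of order ℓ with ∫|z|^β |K(z)| dz < ∞. Then the bias of the Wolverton-Wagner estimator satisfies |E(f̂_n(x)) − f(x)| ≤ (L ∫|z|^β |K(z)| dz / ℓ!) · (1/n) Σ_{k=1}^n h_k^β for all x. -/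
/-!
For each bandwidth `h`, write `f (h z + x)` as its Taylor polynomial of degree `ℓ` at `x` plus a
remainder. A kernel of order `ℓ` integrates that polynomial to `f x`, and by the Lagrange form the
remainder is `(f⁽ˡ⁾ ξ - f⁽ˡ⁾ x) (h z)ˡ / ℓ!`, which the Hölder condition bounds by
`L |h z|^β / ℓ!`. Integrating against `|K|` and averaging over `k` gives the bound.
-/

open MeasureTheory Real Set
open scoped Nat

structure IsKernelOfOrder (K : ℝ → ℝ) (ℓ : ℕ) : Prop where
  integrable : Integrable K
  integral_eq_one : ∫ z, K z = 1
  integrable_abs_pow_mul : ∀ i ≤ ℓ, Integrable fun z => |z| ^ i * |K z|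
  integral_pow_mul_eq_zero : ∀ i, 1 ≤ i → i ≤ ℓ → ∫ z, z ^ i * K z = 0

namespace IsKernelOfOrder

variable {K : ℝ → ℝ} {ℓ : ℕ}

theorem integrable_pow_mul (hK : IsKernelOfOrder K ℓ) {i : ℕ} (hi : i ≤ ℓ) :
    Integrable fun z => z ^ i * K z :=
  (hK.integrable_abs_pow_mul i hi).mono'
    ((continuous_pow i).aestronglyMeasurable.mul hK.integrable.1)
    (ae_of_all _ fun z => by rw [Real.norm_eq_abs, abs_mul, abs_pow])

theorem integrable_mul_sum_pow (hK : IsKernelOfOrder K ℓ) (c : ℕ → ℝ) :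
    Integrable fun z => K z * ∑ i ∈ Finset.range (ℓ + 1), c i * z ^ i := by
  simp only [Finset.mul_sum, mul_left_comm (K _) (c _), mul_comm (K _) (_ ^ _)]
  exact integrable_finsetSum _ fun i hi =>
    (hK.integrable_pow_mul (Nat.lt_succ_iff.mp (Finset.mem_range.mp hi))).const_mul (c i)

theorem integral_mul_sum_pow (hK : IsKernelOfOrder K ℓ) (c : ℕ → ℝ) :
    ∫ z, K z * ∑ i ∈ Finset.range (ℓ + 1), c i * z ^ i = c 0 := by
  simp only [Finset.mul_sum, mul_left_comm (K _) (c _), mul_comm (K _) (_ ^ _)]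
  rw [integral_finsetSum _ fun i hi =>
      (hK.integrable_pow_mul (Nat.lt_succ_iff.mp (Finset.mem_range.mp hi))).const_mul (c i),
    Finset.sum_eq_single_of_mem 0 (Finset.mem_range.mpr ℓ.succ_pos)]
  · simp only [pow_zero, mul_one, integral_const_mul, hK.integral_eq_one]
  · intro i hi hi0
    rw [integral_const_mul, hK.integral_pow_mul_eq_zero i (Nat.one_le_iff_ne_zero.mpr hi0)
      (Nat.lt_succ_iff.mp (Finset.mem_range.mp hi)), mul_zero]

end IsKernelOfOrder

theorem taylorWithinEval_eq_sum_iteratedDeriv {f : ℝ → ℝ} {n : ℕ} (hf : ContDiff ℝ n f)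
    {s : Set ℝ} (hs : UniqueDiffOn ℝ s) {x₀ : ℝ} (hx₀ : x₀ ∈ s) (x : ℝ) :
    taylorWithinEval f n s x₀ x =
      ∑ i ∈ Finset.range (n + 1), (i ! : ℝ)⁻¹ * (x - x₀) ^ i * iteratedDeriv i f x₀ := by
  rw [taylor_within_apply]
  refine Finset.sum_congr rfl fun i hi => ?_
  rw [smul_eq_mul, iteratedDerivWithin_eq_iteratedDeriv hs
    (hf.contDiffAt.of_le (by exact_mod_cast Nat.lt_succ_iff.mp (Finset.mem_range.mp hi))) hx₀]

theorem exists_mem_uIcc_sub_taylor_eq {f : ℝ → ℝ} {ℓ : ℕ} (hf : ContDiff ℝ ℓ f) (x y : ℝ) :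
    ∃ ξ ∈ uIcc x y, f y - ∑ i ∈ Finset.range ℓ, (i ! : ℝ)⁻¹ * (y - x) ^ i * iteratedDeriv i f x
      = iteratedDeriv ℓ f ξ * (y - x) ^ ℓ / ℓ ! := by
  rcases ℓ with _ | m
  · exact ⟨y, right_mem_uIcc, by simp⟩
  rcases eq_or_ne x y with rfl | hxy
  · exact ⟨x, left_mem_uIcc, by simp [Finset.sum_range_succ']⟩
  obtain ⟨ξ, hξ, hrem⟩ := taylor_mean_remainder_lagrange_iteratedDeriv hxy hf.contDiffOn
  rw [taylorWithinEval_eq_sum_iteratedDeriv (hf.of_le (by exact_mod_cast m.le_succ))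
    (uniqueDiffOn_uIcc hxy) left_mem_uIcc] at hrem
  exact ⟨ξ, uIoo_subset_uIcc_self hξ, hrem⟩

theorem abs_sub_taylor_le_of_holder {f : ℝ → ℝ} {ℓ : ℕ} {β L : ℝ} (hβ : 0 < β) (hL : 0 ≤ L)
    (hℓβ : (ℓ : ℝ) ≤ β) (hf : ContDiff ℝ ℓ f)
    (hH : ∀ x y, |iteratedDeriv ℓ f y - iteratedDeriv ℓ f x| ≤ L * |y - x| ^ (β - ℓ))
    (x y : ℝ) :
    |f y - ∑ i ∈ Finset.range (ℓ + 1), (i ! : ℝ)⁻¹ * (y - x) ^ i * iteratedDeriv i f x|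
      ≤ L * |y - x| ^ β / ℓ ! := by
  obtain ⟨ξ, hξ, hrem⟩ := exists_mem_uIcc_sub_taylor_eq hf x y
  have hsplit : iteratedDeriv ℓ f ξ * (y - x) ^ ℓ / (ℓ ! : ℝ)
        - (ℓ ! : ℝ)⁻¹ * (y - x) ^ ℓ * iteratedDeriv ℓ f x
      = (iteratedDeriv ℓ f ξ - iteratedDeriv ℓ f x) * (y - x) ^ ℓ / ℓ ! := by ring
  rw [Finset.sum_range_succ, ← sub_sub, hrem, hsplit, abs_div, abs_mul, abs_pow, Nat.abs_cast]
  calc |iteratedDeriv ℓ f ξ - iteratedDeriv ℓ f x| * |y - x| ^ ℓ / (ℓ ! : ℝ)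
    _ ≤ L * |y - x| ^ (β - ℓ) * |y - x| ^ ℓ / ℓ ! := by
        gcongr
        exact (hH x ξ).trans (mul_le_mul_of_nonneg_left (rpow_le_rpow (abs_nonneg _)
          (abs_sub_left_of_mem_uIcc hξ) (sub_nonneg.mpr hℓβ)) hL)
    _ = L * |y - x| ^ β / ℓ ! := by
        rw [mul_assoc, ← rpow_natCast, ← rpow_add' (abs_nonneg _) (by simpa using hβ.ne'),
          sub_add_cancel]

theorem abs_integral_kernel_mul_sub_le {f K : ℝ → ℝ} {ℓ : ℕ} {β L : ℝ} (hβ : 0 < β)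
    (hL : 0 ≤ L) (hℓβ : (ℓ : ℝ) ≤ β) (hf : ContDiff ℝ ℓ f)
    (hH : ∀ x y, |iteratedDeriv ℓ f y - iteratedDeriv ℓ f x| ≤ L * |y - x| ^ (β - ℓ))
    (hK : IsKernelOfOrder K ℓ) (hKβ : Integrable fun z => |z| ^ β * |K z|)
    {h : ℝ} (hh : 0 < h) (x : ℝ)
    (hfint : Integrable fun z => K z * f (h * z + x)) :
    |(∫ z, K z * f (h * z + x)) - f x| ≤ (L * ∫ z, |z| ^ β * |K z|) / ℓ ! * h ^ β := by
  set c : ℕ → ℝ := fun i => (i ! : ℝ)⁻¹ * h ^ i * iteratedDeriv i f x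
  set P : ℝ → ℝ := fun z => ∑ i ∈ Finset.range (ℓ + 1), c i * z ^ i
  have hP : ∀ z, P z = ∑ i ∈ Finset.range (ℓ + 1),
      (i ! : ℝ)⁻¹ * (h * z + x - x) ^ i * iteratedDeriv i f x := fun z =>
    Finset.sum_congr rfl fun i _ => by rw [add_sub_cancel_right, mul_pow]; ring
  have hKP : ∫ z, K z * P z = f x := by simpa [c] using hK.integral_mul_sum_pow c
  calc |(∫ z, K z * f (h * z + x)) - f x|
      = |∫ z, K z * (f (h * z + x) - P z)| := by
        rw [← hKP, ← integral_sub hfint (hK.integrable_mul_sum_pow c)]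
        simp only [mul_sub, P]
    _ ≤ ∫ z, L * h ^ β / ℓ ! * (|z| ^ β * |K z|) := by
        rw [← Real.norm_eq_abs]
        refine norm_integral_le_of_norm_le (hKβ.const_mul _) (ae_of_all _ fun z => ?_)
        rw [Real.norm_eq_abs, abs_mul, hP z]
        calc |K z| * |f (h * z + x) - ∑ i ∈ Finset.range (ℓ + 1),
                (i ! : ℝ)⁻¹ * (h * z + x - x) ^ i * iteratedDeriv i f x|
            ≤ |K z| * (L * |h * z + x - x| ^ β / ℓ !) :=
              mul_le_mul_of_nonneg_left
                (abs_sub_taylor_le_of_holder hβ hL hℓβ hf hH x (h * z + x)) (abs_nonneg _)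
          _ = L * h ^ β / ℓ ! * (|z| ^ β * |K z|) := by
              rw [add_sub_cancel_right, abs_mul, abs_of_pos hh, mul_rpow hh.le (abs_nonneg z)]
              ring
    _ = (L * ∫ z, |z| ^ β * |K z|) / ℓ ! * h ^ β := by
        rw [integral_const_mul]; ring

/-- Bias bound for the Wolverton-Wagner estimator for `f` in the Hölder class
`Σ(β,L)`: `|E(f̂_n(x)) − f(x)| ≤ (L C_β(K)/ℓ!) (1/n) ∑ h_k^β`, where
`E(f̂_n)(x) = (1/n) ∑_k ∫ K(z) f(h_k z + x) dz`. -/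
theorem stmt_1
    (β L : ℝ) (hβ : 0 < β) (hL : 0 < L)
    (ℓ : ℕ) (hℓ : ℓ = ⌊β⌋₊)
    (f : ℝ → ℝ) (hf_smooth : ContDiff ℝ ℓ f)
    (hf_holder : ∀ x y : ℝ,
      |iteratedDeriv ℓ f y - iteratedDeriv ℓ f x| ≤ L * |y - x| ^ (β - ℓ))
    (K : ℝ → ℝ) (hKint : Integrable K)
    (hK1 : ∫ z, K z = 1)
    (hKmom_int : ∀ i : ℕ, i ≤ ℓ → Integrable (fun z => |z| ^ i * |K z|))
    (hKmom : ∀ i : ℕ, 1 ≤ i → i ≤ ℓ → ∫ z, z ^ i * K z = 0)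
    (hKβ : Integrable (fun z => |z| ^ β * |K z|))
    (n : ℕ) (hn : 0 < n)
    (h : Fin n → ℝ) (hh : ∀ k, 0 < h k)
    (hfint : ∀ (k : Fin n) (x : ℝ), Integrable (fun z => K z * f (h k * z + x)))
    (x : ℝ) :
    |(1 / (n : ℝ)) * (∑ k, ∫ z, K z * f (h k * z + x)) - f x|
      ≤ (L * ∫ z, |z| ^ β * |K z|) / (Nat.factorial ℓ : ℝ)
          * ((1 / (n : ℝ)) * ∑ k, h k ^ β) := by
  have hℓβ : (ℓ : ℝ) ≤ β := hℓ ▸ Nat.floor_le hβ.le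
  have hK : IsKernelOfOrder K ℓ := ⟨hKint, hK1, hKmom_int, hKmom⟩
  have hn' : (n : ℝ) ≠ 0 := Nat.cast_ne_zero.mpr hn.ne'
  set bias : Fin n → ℝ := fun k => (∫ z, K z * f (h k * z + x)) - f x
  have hmean : (1 / (n : ℝ)) * (∑ k, ∫ z, K z * f (h k * z + x)) - f x
      = (1 / (n : ℝ)) * ∑ k, bias k := by
    simp only [bias, Finset.sum_sub_distrib, Finset.sum_const, Finset.card_univ, Fintype.card_fin,
      nsmul_eq_mul]
    field_simp
  calc |(1 / (n : ℝ)) * (∑ k, ∫ z, K z * f (h k * z + x)) - f x|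
      ≤ (1 / (n : ℝ)) * ∑ k, |bias k| := by
        rw [hmean, abs_mul, abs_of_nonneg (by positivity)]
        gcongr
        exact Finset.abs_sum_le_sum_abs _ _
    _ ≤ (1 / (n : ℝ)) * ∑ k, (L * ∫ z, |z| ^ β * |K z|) / ℓ ! * h k ^ β := by
        gcongr with k
        exact abs_integral_kernel_mul_sub_le hβ hL.le hℓβ hf_smooth hf_holder hK hKβ (hh k) x
          (hfint k x)
    _ = (L * ∫ z, |z| ^ β * |K z|) / ℓ ! * ((1 / (n : ℝ)) * ∑ k, h k ^ β) := by
        rw [← Finset.mul_sum]; ring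
end

section
/- Let K ∈ L¹ ∩ L² ∩ L^∞ and f a bounded density, and let X, X' be independent with density f. Then for bandwidths h, h' > 0, E( (∫ K_h(X − x) K_{h'}(X' − x) dx)² ) ≤ ‖K‖₁² ‖K‖₂² ‖f‖_∞ / h. -/
open Real MeasureTheory ProbabilityTheory

/-- Scaled kernel `K_h(u) = (1/h) K(u/h)`. -/
noncomputable def scaledKer (K : ℝ → ℝ) (h u : ℝ) : ℝ := (1 / h) * K (u / h)

/-!
Fix `y`. Cauchy–Schwarz with the weight `|K_{h'}(z - x)|`, whose `dx`-integral is `‖K‖₁`, gives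
`(∫ K_h(y - x) K_{h'}(z - x) dx)² ≤ ‖K‖₁ ∫ K_h(y - x)² |K_{h'}(z - x)| dx`. The law of `X'` is at
most `M` times Lebesgue measure, so integrating in `z` and swapping the integrals bounds the
`z`-average by `M ‖K‖₁² ‖K_h‖₂² = M ‖K‖₁² ‖K‖₂² / h`, uniformly in `y`. Independence turns the
expectation into an iterated integral over the two laws, and the uniform bound concludes.
-/

open scoped ENNReal

theorem ENNReal.sq_lintegral_mul_le {α : Type*} [MeasurableSpace α] {μ : Measure α}
    {A B : α → ℝ≥0∞} (hA : AEMeasurable A μ) (hB : AEMeasurable B μ) :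
    (∫⁻ a, A a * B a ∂μ) ^ 2 ≤ (∫⁻ a, A a ^ 2 * B a ∂μ) * ∫⁻ a, B a ∂μ := by
  have sqrt_sq (x : ℝ≥0∞) : (x ^ (2⁻¹ : ℝ)) ^ 2 = x := by
    exact_mod_cast ENNReal.rpow_inv_natCast_pow two_ne_zero x
  have sqrt_of_sq (x : ℝ≥0∞) : (x ^ 2) ^ (2⁻¹ : ℝ) = x := by
    exact_mod_cast ENNReal.pow_rpow_inv_natCast two_ne_zero x
  have split (a : α) : A a * B a = (A a ^ 2 * B a) ^ (2⁻¹ : ℝ) * B a ^ (2⁻¹ : ℝ) := by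
    rw [← ENNReal.mul_rpow_of_nonneg _ _ (by norm_num), mul_assoc, ← sq, ← mul_pow, sqrt_of_sq]
  have holder := ENNReal.lintegral_mul_norm_pow_le ((hA.pow_const 2).mul hB) hB
    (p := 2⁻¹) (q := 2⁻¹) (by norm_num) (by norm_num) (by norm_num)
  calc (∫⁻ a, A a * B a ∂μ) ^ 2
      ≤ ((∫⁻ a, A a ^ 2 * B a ∂μ) ^ (2⁻¹ : ℝ) * (∫⁻ a, B a ∂μ) ^ (2⁻¹ : ℝ)) ^ 2 := by
        simp_rw [split]
        gcongr
        exact holder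
    _ = (∫⁻ a, A a ^ 2 * B a ∂μ) * ∫⁻ a, B a ∂μ := by rw [mul_pow, sqrt_sq, sqrt_sq]

theorem lintegral_comp_div (g : ℝ → ℝ≥0∞) {a : ℝ} (ha : a ≠ 0) :
    ∫⁻ x, g (x / a) = ENNReal.ofReal |a| * ∫⁻ y, g y := by
  have := lintegral_map_equiv g (MeasurableEquiv.mulLeft₀ a⁻¹ (inv_ne_zero ha)) (μ := volume)
  simp only [MeasurableEquiv.coe_mulLeft₀] at this
  rw [Real.map_volume_mul_left (inv_ne_zero ha), inv_inv, lintegral_smul_measure] at this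
  simpa [div_eq_inv_mul] using this.symm

/-- Young's inequality `‖a ⋆ b‖²_{L²(ν)} ≤ c ‖a‖₂² ‖b‖₁²`, via Cauchy–Schwarz with the weight
`b (z - ·)`. -/
theorem lintegral_sq_conv_le {G : Type*} [AddCommGroup G] [MeasurableSpace G] [MeasurableAdd₂ G]
    [MeasurableNeg G] {μ ν : Measure G} [SFinite μ] [μ.IsAddLeftInvariant] [μ.IsNegInvariant]
    {c : ℝ≥0∞} (hν : ν ≤ c • μ) {a b : G → ℝ≥0∞} (ha : Measurable a) (hb : Measurable b) :
    ∫⁻ z, (∫⁻ x, a x * b (z - x) ∂μ) ^ 2 ∂ν ≤ c * (∫⁻ x, a x ^ 2 ∂μ) * (∫⁻ u, b u ∂μ) ^ 2 := by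
  have hF : Measurable (Function.uncurry fun z x => a x ^ 2 * b (z - x)) := by fun_prop
  calc ∫⁻ z, (∫⁻ x, a x * b (z - x) ∂μ) ^ 2 ∂ν
      ≤ ∫⁻ z, (∫⁻ x, a x ^ 2 * b (z - x) ∂μ) * ∫⁻ u, b u ∂μ ∂ν := by
        refine lintegral_mono fun z => ?_
        rw [← lintegral_sub_left_eq_self b z]
        exact ENNReal.sq_lintegral_mul_le ha.aemeasurable (by fun_prop)
    _ = (∫⁻ z, ∫⁻ x, a x ^ 2 * b (z - x) ∂μ ∂ν) * ∫⁻ u, b u ∂μ :=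
        lintegral_mul_const _ hF.lintegral_prod_right'
    _ ≤ (∫⁻ z, ∫⁻ x, a x ^ 2 * b (z - x) ∂μ ∂(c • μ)) * ∫⁻ u, b u ∂μ :=
        mul_le_mul_left (lintegral_mono' hν le_rfl) _
    _ = c * (∫⁻ x, a x ^ 2 ∂μ) * (∫⁻ u, b u ∂μ) ^ 2 := by
        have inner (x : G) : ∫⁻ z, a x ^ 2 * b (z - x) ∂μ = a x ^ 2 * ∫⁻ u, b u ∂μ := by
          rw [lintegral_const_mul _ (by fun_prop), lintegral_sub_right_eq_self]
        rw [lintegral_smul_measure, smul_eq_mul, lintegral_lintegral_swap hF.aemeasurable,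
          lintegral_congr inner, lintegral_mul_const _ (by fun_prop)]
        ring

theorem ProbabilityTheory.IndepFun.lintegral_comp_eq_lintegral_lintegral {Ω β β' : Type*}
    [MeasurableSpace Ω] [MeasurableSpace β] [MeasurableSpace β'] {μ : Measure Ω}
    [IsFiniteMeasure μ] {X : Ω → β} {Y : Ω → β'} (hXY : IndepFun X Y μ)
    (hX : AEMeasurable X μ) (hY : AEMeasurable Y μ) {F : β × β' → ℝ≥0∞} (hF : Measurable F) :
    ∫⁻ ω, F (X ω, Y ω) ∂μ = ∫⁻ y, ∫⁻ z, F (y, z) ∂(μ.map Y) ∂(μ.map X) := by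
  rw [← lintegral_map' hF.aemeasurable (hX.prodMk hY), hXY.map_prod_eq_prod_map_map hX hY,
    lintegral_prod _ hF.aemeasurable]

theorem ENNReal.ofReal_inv_mul_ofReal {x : ℝ} (hx : 0 < x) :
    ENNReal.ofReal x⁻¹ * ENNReal.ofReal x = 1 := by
  rw [← ENNReal.ofReal_mul (inv_nonneg.2 hx.le), inv_mul_cancel₀ hx.ne', ENNReal.ofReal_one]

theorem ENNReal.ofReal_sq_eq_enorm_sq (x : ℝ) : ENNReal.ofReal (x ^ 2) = ‖x‖ₑ ^ 2 := by
  rw [← Real.enorm_of_nonneg (sq_nonneg x), enorm_pow]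

theorem ofReal_integral_sq_eq_lintegral_enorm_sq {α : Type*} [MeasurableSpace α] {μ : Measure α}
    {f : α → ℝ} (hf : MemLp f 2 μ) :
    ENNReal.ofReal (∫ a, f a ^ 2 ∂μ) = ∫⁻ a, ‖f a‖ₑ ^ 2 ∂μ := by
  simp_rw [ofReal_integral_eq_lintegral_ofReal hf.integrable_sq (ae_of_all _ fun a => sq_nonneg _),
    ENNReal.ofReal_sq_eq_enorm_sq]

noncomputable def scaledKerCorr (K : ℝ → ℝ) (h h' y z : ℝ) : ℝ :=
  ∫ x, scaledKer K h (y - x) * scaledKer K h' (z - x)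

section ScaledKernel

variable {K K' : ℝ → ℝ} {s h h' : ℝ}

@[fun_prop]
theorem measurable_scaledKer (hK : Measurable K) (s : ℝ) : Measurable (scaledKer K s) := by
  unfold scaledKer
  fun_prop

theorem scaledKer_ae_eq (hKK' : K =ᵐ[volume] K') (s : ℝ) :
    scaledKer K s =ᵐ[volume] scaledKer K' s := by
  rcases eq_or_ne s 0 with rfl | hs
  · exact Filter.Eventually.of_forall fun u => by simp [scaledKer]
  have hcomp := (Measure.quasiMeasurePreserving_smul volume (inv_ne_zero hs)).ae_eq_comp hKK'
  filter_upwards [hcomp] with u hu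
  simp only [Function.comp_apply, smul_eq_mul] at hu
  simp only [scaledKer, div_eq_inv_mul, hu]

theorem enorm_scaledKer (hs : 0 < s) (u : ℝ) :
    ‖scaledKer K s u‖ₑ = ENNReal.ofReal s⁻¹ * ‖K (u / s)‖ₑ := by
  rw [scaledKer, enorm_mul, one_div, Real.enorm_of_nonneg (inv_nonneg.2 hs.le)]

theorem lintegral_enorm_scaledKer (hs : 0 < s) :
    ∫⁻ u, ‖scaledKer K s u‖ₑ = ∫⁻ u, ‖K u‖ₑ := by
  simp_rw [enorm_scaledKer hs]
  rw [lintegral_const_mul' _ _ ENNReal.ofReal_ne_top, lintegral_comp_div (‖K ·‖ₑ) hs.ne',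
    abs_of_pos hs, ← mul_assoc, ENNReal.ofReal_inv_mul_ofReal hs, one_mul]

theorem lintegral_enorm_scaledKer_sq (hs : 0 < s) :
    ∫⁻ u, ‖scaledKer K s u‖ₑ ^ 2 = ENNReal.ofReal s⁻¹ * ∫⁻ u, ‖K u‖ₑ ^ 2 := by
  simp_rw [enorm_scaledKer hs, mul_pow]
  rw [lintegral_const_mul' _ _ (by simp), lintegral_comp_div (‖K ·‖ₑ ^ 2) hs.ne', abs_of_pos hs,
    sq, mul_assoc, ← mul_assoc _ (ENNReal.ofReal s), ENNReal.ofReal_inv_mul_ofReal hs, one_mul]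

theorem scaledKerCorr_congr_ae (hKK' : K =ᵐ[volume] K') :
    scaledKerCorr K h h' = scaledKerCorr K' h h' := by
  ext y z
  refine integral_congr_ae ?_
  filter_upwards [(quasiMeasurePreserving_sub_left volume y).ae_eq_comp (scaledKer_ae_eq hKK' h),
    (quasiMeasurePreserving_sub_left volume z).ae_eq_comp (scaledKer_ae_eq hKK' h')] with x hy hz
  simp only [Function.comp_apply] at hy hz
  rw [hy, hz]

@[fun_prop]
theorem measurable_scaledKerCorr (hK : Measurable K) :
    Measurable (Function.uncurry (scaledKerCorr K h h')) := by
  have hF : Measurable fun q : (ℝ × ℝ) × ℝ =>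
      scaledKer K h (q.1.1 - q.2) * scaledKer K h' (q.1.2 - q.2) := by
    fun_prop
  exact hF.stronglyMeasurable.integral_prod_right'.measurable

theorem enorm_scaledKerCorr_le (y z : ℝ) :
    ‖scaledKerCorr K h h' y z‖ₑ ≤ ∫⁻ x, ‖scaledKer K h (y - x)‖ₑ * ‖scaledKer K h' (z - x)‖ₑ := by
  rw [scaledKerCorr]
  simpa only [enorm_mul] using enorm_integral_le_lintegral_enorm
    (fun x => scaledKer K h (y - x) * scaledKer K h' (z - x))

theorem lintegral_enorm_scaledKerCorr_sq_le (hK : Measurable K) {ν : Measure ℝ} {c : ℝ≥0∞}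
    (hν : ν ≤ c • volume) (hh : 0 < h) (hh' : 0 < h') (y : ℝ) :
    ∫⁻ z, ‖scaledKerCorr K h h' y z‖ₑ ^ 2 ∂ν
      ≤ c * ENNReal.ofReal h⁻¹ * (∫⁻ u, ‖K u‖ₑ ^ 2) * (∫⁻ u, ‖K u‖ₑ) ^ 2 := by
  calc ∫⁻ z, ‖scaledKerCorr K h h' y z‖ₑ ^ 2 ∂ν
      ≤ ∫⁻ z, (∫⁻ x, ‖scaledKer K h (y - x)‖ₑ * ‖scaledKer K h' (z - x)‖ₑ) ^ 2 ∂ν :=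
        lintegral_mono fun z => by gcongr; exact enorm_scaledKerCorr_le y z
    _ ≤ c * (∫⁻ x, ‖scaledKer K h (y - x)‖ₑ ^ 2) * (∫⁻ u, ‖scaledKer K h' u‖ₑ) ^ 2 :=
        lintegral_sq_conv_le hν (by fun_prop) (by fun_prop)
    _ = c * ENNReal.ofReal h⁻¹ * (∫⁻ u, ‖K u‖ₑ ^ 2) * (∫⁻ u, ‖K u‖ₑ) ^ 2 := by
        rw [lintegral_sub_left_eq_self (‖scaledKer K h ·‖ₑ ^ 2) y, lintegral_enorm_scaledKer_sq hh,
          lintegral_enorm_scaledKer hh']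
        ring

variable {Ω : Type*} [MeasurableSpace Ω] {μ : Measure Ω} [IsProbabilityMeasure μ] {X X' : Ω → ℝ}

theorem lintegral_enorm_scaledKerCorr_comp_sq_le (hX : Measurable X) (hX' : Measurable X')
    (hindep : IndepFun X X' μ) {c : ℝ≥0∞} (hlaw : μ.map X' ≤ c • volume) (hK : Measurable K)
    (hh : 0 < h) (hh' : 0 < h') :
    ∫⁻ ω, ‖scaledKerCorr K h h' (X ω) (X' ω)‖ₑ ^ 2 ∂μ
      ≤ c * ENNReal.ofReal h⁻¹ * (∫⁻ u, ‖K u‖ₑ ^ 2) * (∫⁻ u, ‖K u‖ₑ) ^ 2 := by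
  have := Measure.isProbabilityMeasure_map (μ := μ) hX.aemeasurable
  rw [hindep.lintegral_comp_eq_lintegral_lintegral hX.aemeasurable hX'.aemeasurable
    (F := fun p => ‖scaledKerCorr K h h' p.1 p.2‖ₑ ^ 2)
    ((measurable_scaledKerCorr hK).enorm.pow_const 2)]
  calc ∫⁻ y, ∫⁻ z, ‖scaledKerCorr K h h' y z‖ₑ ^ 2 ∂(μ.map X') ∂(μ.map X)
      ≤ ∫⁻ _, c * ENNReal.ofReal h⁻¹ * (∫⁻ u, ‖K u‖ₑ ^ 2) * (∫⁻ u, ‖K u‖ₑ) ^ 2 ∂(μ.map X) :=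
        lintegral_mono fun y => lintegral_enorm_scaledKerCorr_sq_le hK hlaw hh hh' y
    _ = c * ENNReal.ofReal h⁻¹ * (∫⁻ u, ‖K u‖ₑ ^ 2) * (∫⁻ u, ‖K u‖ₑ) ^ 2 := by simp

theorem integral_scaledKerCorr_comp_sq_le (hX : Measurable X) (hX' : Measurable X')
    (hindep : IndepFun X X' μ) {M : ℝ} (hM : 0 ≤ M)
    (hlaw : μ.map X' ≤ ENNReal.ofReal M • volume) (hK : Measurable K) (hK1 : Integrable K)
    (hK2 : MemLp K 2 volume) (hh : 0 < h) (hh' : 0 < h') :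
    ∫ ω, scaledKerCorr K h h' (X ω) (X' ω) ^ 2 ∂μ
      ≤ (∫ u, |K u|) ^ 2 * (∫ u, K u ^ 2) * M / h := by
  have hmeas : Measurable fun ω => scaledKerCorr K h h' (X ω) (X' ω) :=
    (measurable_scaledKerCorr hK).comp (hX.prodMk hX')
  have hL1 : ENNReal.ofReal (∫ u, |K u|) = ∫⁻ u, ‖K u‖ₑ := by
    simpa only [Real.norm_eq_abs] using ofReal_integral_norm_eq_lintegral_enorm hK1
  have hL1_nonneg : 0 ≤ ∫ u, |K u| := integral_nonneg fun u => abs_nonneg _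
  have hL2_nonneg : 0 ≤ ∫ u, K u ^ 2 := integral_nonneg fun u => sq_nonneg _
  rw [integral_eq_lintegral_of_nonneg_ae (ae_of_all _ fun ω => sq_nonneg _)
    (hmeas.pow_const 2).aestronglyMeasurable]
  refine ENNReal.toReal_le_of_le_ofReal (by positivity) ?_
  simp_rw [ENNReal.ofReal_sq_eq_enorm_sq]
  refine (lintegral_enorm_scaledKerCorr_comp_sq_le hX hX' hindep hlaw hK hh hh').trans_eq ?_
  rw [← ofReal_integral_sq_eq_lintegral_enorm_sq hK2, ← hL1, ← ENNReal.ofReal_pow hL1_nonneg,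
    ← ENNReal.ofReal_mul hM, ← ENNReal.ofReal_mul (by positivity),
    ← ENNReal.ofReal_mul (by positivity)]
  congr 1
  ring

end ScaledKernel

theorem stmt_19_general
    {Ω : Type*} [MeasureSpace Ω] [IsProbabilityMeasure (ℙ : Measure Ω)]
    (X X' : Ω → ℝ) (hX : Measurable X) (hX' : Measurable X')
    (hindep : IndepFun X X' ℙ)
    (f : ℝ → ℝ) (M : ℝ) (hf0 : ∀ y, 0 ≤ f y) (hfM : ∀ y, f y ≤ M)
    (hdensX' : Measure.map X' ℙ
      = volume.withDensity (fun y => ENNReal.ofReal (f y)))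
    (K : ℝ → ℝ) (hK1 : Integrable K) (hK2 : MemLp K 2 volume)
    (h h' : ℝ) (hh : 0 < h) (hh' : 0 < h') :
    ∫ ω, (∫ x, scaledKer K h (X ω - x) * scaledKer K h' (X' ω - x)) ^ 2 ∂ℙ
      ≤ (∫ u, |K u|) ^ 2 * (∫ u, (K u) ^ 2) * M / h := by
  obtain ⟨K', hK'm, hKK'⟩ := hK1.aemeasurable
  have hlaw : Measure.map X' ℙ ≤ ENNReal.ofReal M • volume := by
    rw [hdensX', ← withDensity_const]
    exact withDensity_mono (ae_of_all _ fun y => ENNReal.ofReal_le_ofReal (hfM y))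
  have habs : ∫ u, |K u| = ∫ u, |K' u| :=
    integral_congr_ae (hKK'.mono fun u hu => by simp only [hu])
  have hsq : ∫ u, K u ^ 2 = ∫ u, K' u ^ 2 :=
    integral_congr_ae (hKK'.mono fun u hu => by simp only [hu])
  change ∫ ω, scaledKerCorr K h h' (X ω) (X' ω) ^ 2 ∂ℙ ≤ _
  rw [scaledKerCorr_congr_ae hKK', habs, hsq]
  exact integral_scaledKerCorr_comp_sq_le hX hX' hindep ((hf0 0).trans (hfM 0)) hlaw hK'm
    (hK1.congr hKK') (hK2.ae_eq hKK') hh hh'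

/-- For `K ∈ L¹ ∩ L² ∩ L^∞`, a bounded density `f`, and independent `X, X'`
with density `f`, `E((∫ K_h(X−x) K_{h'}(X'−x) dx)²) ≤ ‖K‖₁² ‖K‖₂² ‖f‖_∞ / h`. -/
theorem stmt_19
    {Ω : Type*} [MeasureSpace Ω] [IsProbabilityMeasure (ℙ : Measure Ω)]
    (X X' : Ω → ℝ) (hX : Measurable X) (hX' : Measurable X')
    (hindep : IndepFun X X' ℙ)
    (f : ℝ → ℝ) (M : ℝ) (hf0 : ∀ y, 0 ≤ f y) (hfM : ∀ y, f y ≤ M)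
    (hdensX : Measure.map X ℙ
      = volume.withDensity (fun y => ENNReal.ofReal (f y)))
    (hdensX' : Measure.map X' ℙ
      = volume.withDensity (fun y => ENNReal.ofReal (f y)))
    (K : ℝ → ℝ) (hK1 : Integrable K) (hK2 : MemLp K 2 volume)
    (hKinf : MemLp K ⊤ volume)
    (h h' : ℝ) (hh : 0 < h) (hh' : 0 < h') :
    ∫ ω, (∫ x, scaledKer K h (X ω - x) * scaledKer K h' (X' ω - x)) ^ 2 ∂ℙ
      ≤ (∫ u, |K u|) ^ 2 * (∫ u, (K u) ^ 2) * M / h :=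
  stmt_19_general X X' hX hX' hindep f M hf0 hfM hdensX' K hK1 hK2 h h' hh hh'
end
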